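/- arXiv:1604.04813 — 4 statements merged into one kernel-verified Lean document; each statement's English description precedes it below -/
import Mathlib

section
/- Let A, B, C be real n×n matrices with A and C symmetric. Suppose the real quadratic form Q on ℝⁿ ⊕ ℝⁿ given by Q(v, w) = Σ_{i,j} A_{ij} v_i v_j + 2 Σ_{i,j} B_{ij} v_i w_j + Σ_{i,j} C_{ij} w_i w_j is positive semidefinite, i.e. Q(v, w) ≥ 0 for all v, w ∈ ℝⁿ. Then trace(A·C) = Σ_{i,j} A_{ij} C_{ji} ≥ Σ_{i,j} B_{ij} B_{ji} = trace(B·B). -/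
open Matrix

lemma psd_trace_nonneg {m : Type*} [Fintype m] {P : Matrix m m ℝ} (hP : P.PosSemidef) :
    0 ≤ P.trace := by
  classical
  rw [Matrix.trace]
  apply Finset.sum_nonneg
  intro i _
  simpa [dotProduct, Matrix.mulVec, Pi.single_apply] using hP.dotProduct_mulVec_nonneg (Pi.single i 1)

open scoped MatrixOrder in
lemma trace_mul_nonneg_aux {m : Type*} [Fintype m] [DecidableEq m]
    {M N : Matrix m m ℝ} (hM : M.PosSemidef) (hN : N.PosSemidef) :
    0 ≤ (M * N).trace := by
  have h4 : (CFC.sqrt M)ᴴ = CFC.sqrt M := (nonneg_iff_posSemidef.mp (CFC.sqrt_nonneg M)).1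
  have h3 : (CFC.sqrt M * N * (CFC.sqrt M)ᴴ).PosSemidef := hN.mul_mul_conjTranspose_same (CFC.sqrt M)
  rw [h4] at h3
  have h2 : (M * N).trace = (CFC.sqrt M * N * CFC.sqrt M).trace := by
    rw [Matrix.trace_mul_cycle, CFC.sqrt_mul_sqrt_self M hM.nonneg]
  rw [h2]
  exact psd_trace_nonneg h3

lemma trace_fromBlocks_aux {m : Type*} [Fintype m]
    (A B C D : Matrix m m ℝ) :
    (fromBlocks A B C D).trace = A.trace + D.trace := by
  simp [Matrix.trace, Matrix.diag, Fintype.sum_sum_type]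


/-- **Lemma (matrix inequality).** Let `A`, `B`, `C` be real `n × n` matrices with `A` and `C`
symmetric. If the real quadratic form
`Q(v, w) = Σ_{i,j} A i j * v i * v j + 2 Σ_{i,j} B i j * v i * w j + Σ_{i,j} C i j * w i * w j`
on `ℝⁿ ⊕ ℝⁿ` is positive semidefinite, then
`trace (A ⬝ C) = Σ_{i,j} A i j * C j i ≥ Σ_{i,j} B i j * B j i = trace (B ⬝ B)`. -/
theorem stmt0 {n : ℕ} (A B C : Matrix (Fin n) (Fin n) ℝ)
    (hA : A.IsSymm) (hC : C.IsSymm)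
    (hQ : ∀ v w : Fin n → ℝ,
      0 ≤ (∑ i, ∑ j, A i j * v i * v j) + 2 * (∑ i, ∑ j, B i j * v i * w j)
        + (∑ i, ∑ j, C i j * w i * w j)) :
    ∑ i, ∑ j, B i j * B j i ≤ ∑ i, ∑ j, A i j * C j i := by
  set M : Matrix (Fin n ⊕ Fin n) (Fin n ⊕ Fin n) ℝ := fromBlocks A B Bᵀ C with hM
  have hMherm : M.IsHermitian := by
    rw [Matrix.IsHermitian, hM, conjTranspose_eq_transpose_of_trivial, fromBlocks_transpose,
      hA.eq, hC.eq, transpose_transpose]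
  have hMpsd : M.PosSemidef := by
    refine PosSemidef.of_dotProduct_mulVec_nonneg hMherm fun x => ?_
    have key : dotProduct (star x) (M *ᵥ x)
        = (∑ i, ∑ j, A i j * x (Sum.inl i) * x (Sum.inl j))
          + 2 * (∑ i, ∑ j, B i j * x (Sum.inl i) * x (Sum.inr j))
          + (∑ i, ∑ j, C i j * x (Sum.inr i) * x (Sum.inr j)) := by
      simp only [star_trivial, dotProduct, mulVec, Fintype.sum_sum_type, hM,
        fromBlocks_apply₁₁, fromBlocks_apply₁₂, fromBlocks_apply₂₁, fromBlocks_apply₂₂,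
        dotProduct, Finset.mul_sum, Finset.sum_add_distrib, mul_add]
      have e1 : ∀ (P : Matrix (Fin n) (Fin n) ℝ) (u v : Fin n → ℝ),
          ∑ i, ∑ j, u i * (P i j * v j) = ∑ i, ∑ j, P i j * u i * v j := by
        intro P u v
        refine Finset.sum_congr rfl fun i _ => Finset.sum_congr rfl fun j _ => by ring
      have e2 : ∑ i, ∑ j, (fun p => x (Sum.inr p)) i * (Bᵀ i j * (fun p => x (Sum.inl p)) j)
          = ∑ i, ∑ j, B i j * x (Sum.inl i) * x (Sum.inr j) := by
        rw [Finset.sum_comm]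
        refine Finset.sum_congr rfl fun i _ => Finset.sum_congr rfl fun j _ => by
          simp only [Matrix.transpose_apply]; ring
      rw [e1 A (fun p => x (Sum.inl p)) (fun p => x (Sum.inl p)),
        e1 B (fun p => x (Sum.inl p)) (fun p => x (Sum.inr p)),
        e1 C (fun p => x (Sum.inr p)) (fun p => x (Sum.inr p)), e2]
      have e3 : ∑ i, ∑ j, (2:ℝ) * (B i j * x (Sum.inl i) * x (Sum.inr j))
          = (∑ i, ∑ j, B i j * x (Sum.inl i) * x (Sum.inr j)) * 2 := by
        rw [Finset.sum_mul]
        refine Finset.sum_congr rfl fun i _ => ?_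
        rw [Finset.sum_mul]
        exact Finset.sum_congr rfl fun j _ => by ring
      rw [e3]
      ring
    rw [key]
    exact hQ (fun i => x (Sum.inl i)) (fun i => x (Sum.inr i))
  set T : Matrix (Fin n ⊕ Fin n) (Fin n ⊕ Fin n) ℝ := fromBlocks 0 1 (-1) 0 with hT
  have hTt : Tᴴ = fromBlocks 0 (-1) 1 0 := by
    rw [hT, fromBlocks_conjTranspose]; simp
  have hNpsd : (T * M * Tᴴ).PosSemidef := hMpsd.mul_mul_conjTranspose_same T
  have htr : 0 ≤ (M * (T * M * Tᴴ)).trace := trace_mul_nonneg_aux hMpsd hNpsd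
  have hcomp : (M * (T * M * Tᴴ)).trace = 2 * ((A * C).trace - (B * B).trace) := by
    rw [hTt, hM, hT]
    simp only [fromBlocks_multiply, Matrix.mul_zero, Matrix.zero_mul, Matrix.mul_one,
      Matrix.one_mul, Matrix.mul_neg, Matrix.neg_mul, zero_add, add_zero, neg_neg]
    rw [trace_fromBlocks_aux]
    have h1 : (C * A).trace = (A * C).trace := Matrix.trace_mul_comm C A
    have h2 : (Bᵀ * Bᵀ).trace = (B * B).trace := by
      rw [← Matrix.transpose_mul, Matrix.trace_transpose]
    simp only [Matrix.trace_add, Matrix.trace_neg, Matrix.trace_sub]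
    rw [h1, h2]
    ring
  have hfin : (B * B).trace ≤ (A * C).trace := by nlinarith [htr, hcomp]
  have e1 : (B * B).trace = ∑ i, ∑ j, B i j * B j i := by
    simp [Matrix.trace, Matrix.mul_apply, Matrix.diag]
  have e2 : (A * C).trace = ∑ i, ∑ j, A i j * C j i := by
    simp [Matrix.trace, Matrix.mul_apply, Matrix.diag]
  rw [← e1, ← e2]
  exact hfin
end

section
/- Let A, B, C be complex n×n matrices with A and C Hermitian. Suppose that for all v, w ∈ ℂⁿ the real part of Σ_{i,j} A_{ij} v_i conj(v_j) + 2 Re(Σ_{i,j} B_{ij} v_i w_j) + Σ_{i,j} C_{ij} w_i conj(w_j) is non-negative. Then Re(Σ_{i,j} A_{ij} conj(C_{ij})) ≥ Re(Σ_{i,j} B_{ij} conj(B_{ji})). -/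
open Matrix in
open scoped ComplexOrder in
private lemma psd_trace_nonneg' {m : Type*} [Fintype m] [DecidableEq m]
    {M : Matrix m m ℂ} (hM : M.PosSemidef) : 0 ≤ M.trace := by
  rw [Matrix.trace]
  apply Finset.sum_nonneg
  intro i _
  have := hM.dotProduct_mulVec_nonneg (Pi.single i 1)
  simpa [Matrix.mulVec_single, dotProduct, Pi.single_apply, apply_ite] using this

open Matrix in
open scoped ComplexOrder MatrixOrder in
private lemma psd_trace_mul_nonneg' {m : Type*} [Fintype m] [DecidableEq m]
    {M N : Matrix m m ℂ} (hM : M.PosSemidef) (hN : N.PosSemidef) :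
    0 ≤ (M * N).trace := by
  have h1 : M * N = M * CFC.sqrt N * CFC.sqrt N := by
    rw [mul_assoc, CFC.sqrt_mul_sqrt_self N hN.nonneg]
  rw [h1, Matrix.trace_mul_cycle]
  have hpsd : (CFC.sqrt N * M * CFC.sqrt N).PosSemidef := by
    have h2 := hM.conjTranspose_mul_mul_same (CFC.sqrt N)
    rwa [(CFC.sqrt_nonneg N).posSemidef.isHermitian.eq] at h2
  exact psd_trace_nonneg' hpsd

private lemma trace_fromBlocks' {m : Type*} [Fintype m] [DecidableEq m]
    (X : Matrix m m ℂ) (Y : Matrix m m ℂ) (Z : Matrix m m ℂ) (W : Matrix m m ℂ) :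
    (Matrix.fromBlocks X Y Z W).trace = X.trace + W.trace := by
  simp [Matrix.trace, Fintype.sum_sum_type, Matrix.diag]

open Complex

/-- **Hermitian version of the matrix inequality.** Let `A`, `B`, `C` be complex `n × n`
matrices with `A` and `C` Hermitian. If for all `v, w ∈ ℂⁿ` the real part of
`Σ_{i,j} A i j * v i * conj (v j) + 2 Re(Σ_{i,j} B i j * v i * w j)
  + Σ_{i,j} C i j * w i * conj (w j)`
is non-negative, then
`Re (Σ_{i,j} A i j * conj (C i j)) ≥ Re (Σ_{i,j} B i j * conj (B j i))`. -/
theorem stmt1 {n : ℕ} (A B C : Matrix (Fin n) (Fin n) ℂ)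
    (hA : A.IsHermitian) (hC : C.IsHermitian)
    (hQ : ∀ v w : Fin n → ℂ,
      0 ≤ (∑ i, ∑ j, A i j * v i * (starRingEnd ℂ) (v j)).re
        + 2 * (∑ i, ∑ j, B i j * v i * w j).re
        + (∑ i, ∑ j, C i j * w i * (starRingEnd ℂ) (w j)).re) :
    (∑ i, ∑ j, B i j * (starRingEnd ℂ) (B j i)).re
      ≤ (∑ i, ∑ j, A i j * (starRingEnd ℂ) (C i j)).re := by
  classical
  open Matrix in
  open scoped ComplexOrder in
  (set M : Matrix (Fin n ⊕ Fin n) (Fin n ⊕ Fin n) ℂ := Matrix.fromBlocks A B Bᴴ Cᵀ with hMdef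
   have hMH : M.IsHermitian := by
     rw [Matrix.IsHermitian, hMdef, Matrix.fromBlocks_conjTranspose, hA.eq,
       Matrix.conjTranspose_conjTranspose, hC.transpose.eq]
   have hMpsd : M.PosSemidef := by
    refine Matrix.PosSemidef.of_dotProduct_mulVec_nonneg hMH fun x => ?_
    set u : Fin n → ℂ := x ∘ Sum.inl with hu
    set w : Fin n → ℂ := x ∘ Sum.inr with hw
    have hx : x = Sum.elim u w := (Sum.elim_comp_inl_inr x).symm
    have hquad : star x ⬝ᵥ M *ᵥ x
        = star u ⬝ᵥ A *ᵥ u + star u ⬝ᵥ B *ᵥ w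
          + (star w ⬝ᵥ Bᴴ *ᵥ u + star w ⬝ᵥ Cᵀ *ᵥ w) := by
      conv_lhs => rw [hx]
      rw [hMdef, Function.star_sumElim, Matrix.fromBlocks_mulVec,
        sumElim_dotProduct_sumElim, dotProduct_add, dotProduct_add]
      simp only [Sum.elim_comp_inl, Sum.elim_comp_inr]
    have hreal : star (star x ⬝ᵥ M *ᵥ x) = star x ⬝ᵥ M *ᵥ x := by
      calc star (star x ⬝ᵥ M *ᵥ x) = star (M *ᵥ x) ⬝ᵥ x := by
            rw [← Matrix.star_dotProduct_star, star_star]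
        _ = (star x ᵥ* Mᴴ) ⬝ᵥ x := by rw [Matrix.star_mulVec]
        _ = star x ⬝ᵥ (Mᴴ *ᵥ x) := (Matrix.dotProduct_mulVec _ _ _).symm
        _ = star x ⬝ᵥ M *ᵥ x := by rw [hMH.eq]
    have him : (star x ⬝ᵥ M *ᵥ x).im = 0 := by
      have h := congrArg Complex.im hreal
      simp only [Complex.star_def, Complex.conj_im] at h
      linarith
    have hcross : star (star u ⬝ᵥ B *ᵥ w) = star w ⬝ᵥ Bᴴ *ᵥ u := by
      calc star (star u ⬝ᵥ B *ᵥ w) = star (B *ᵥ w) ⬝ᵥ u := by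
            rw [← Matrix.star_dotProduct_star, star_star]
        _ = (star w ᵥ* Bᴴ) ⬝ᵥ u := by rw [Matrix.star_mulVec]
        _ = star w ⬝ᵥ Bᴴ *ᵥ u := (Matrix.dotProduct_mulVec _ _ _).symm
    have e1 : star u ⬝ᵥ A *ᵥ u
        = ∑ i, ∑ j, A i j * (star u) i * (starRingEnd ℂ) ((star u) j) := by
      simp only [dotProduct, Matrix.mulVec, Finset.mul_sum, Pi.star_apply,
        Complex.star_def, Complex.conj_conj]
      exact Finset.sum_congr rfl fun i _ => Finset.sum_congr rfl fun j _ => by ring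
    have e2 : star u ⬝ᵥ B *ᵥ w = ∑ i, ∑ j, B i j * (star u) i * w j := by
      simp only [dotProduct, Matrix.mulVec, Finset.mul_sum, Pi.star_apply,
        Complex.star_def]
      exact Finset.sum_congr rfl fun i _ => Finset.sum_congr rfl fun j _ => by ring
    have e3 : star w ⬝ᵥ Cᵀ *ᵥ w = ∑ i, ∑ j, C i j * w i * (starRingEnd ℂ) (w j) := by
      rw [Finset.sum_comm]
      simp only [dotProduct, Matrix.mulVec, Finset.mul_sum, Pi.star_apply,
        Complex.star_def, Matrix.transpose_apply]
      exact Finset.sum_congr rfl fun i _ => Finset.sum_congr rfl fun j _ => by ring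
    have hre : 0 ≤ (star x ⬝ᵥ M *ᵥ x).re := by
      have hQ' := hQ (star u) w
      rw [hquad]
      simp only [Complex.add_re]
      have hBre : (star w ⬝ᵥ Bᴴ *ᵥ u).re = (star u ⬝ᵥ B *ᵥ w).re := by
        rw [← hcross, Complex.star_def, Complex.conj_re]
      rw [hBre, e1, e2, e3] at *
      linarith
    rw [Complex.le_def]
    simp [him, hre]
   set N : Matrix (Fin n ⊕ Fin n) (Fin n ⊕ Fin n) ℂ :=
     Matrix.fromBlocks C (-Bᵀ) (-(Bᴴᵀ)) Aᵀ with hNdef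
   have hNpsd : N.PosSemidef := by
     set J : Matrix (Fin n ⊕ Fin n) (Fin n ⊕ Fin n) ℂ :=
       Matrix.fromBlocks 0 1 (-1) 0 with hJdef
     have h := (hMpsd.transpose).mul_mul_conjTranspose_same J
     have heq : J * Mᵀ * Jᴴ = N := by
       rw [hJdef]
       rw [hMdef, hNdef]
       simp [Matrix.fromBlocks_transpose, Matrix.fromBlocks_conjTranspose,
         Matrix.fromBlocks_multiply]
     rwa [heq] at h
   have htr : 0 ≤ (M * N).trace := psd_trace_mul_nonneg' hMpsd hNpsd
   have htr2 : (M * N).trace = 2 * ((A * C).trace - (B * (Bᴴᵀ)).trace) := by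
     rw [hMdef, hNdef, Matrix.fromBlocks_multiply, trace_fromBlocks']
     have h1 : (Cᵀ * Aᵀ).trace = (A * C).trace := by
       rw [← Matrix.transpose_mul, Matrix.trace_transpose]
     have h2 : (Bᴴ * Bᵀ).trace = (B * Bᴴᵀ).trace := by
       have : (B * Bᴴᵀ)ᵀ = Bᴴ * Bᵀ := by
         rw [Matrix.transpose_mul, Matrix.transpose_transpose]
       rw [← this, Matrix.trace_transpose]
     rw [Matrix.trace_add, Matrix.trace_add, Matrix.mul_neg, Matrix.mul_neg,
       Matrix.trace_neg, Matrix.trace_neg, h1, h2]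
     ring
   have hAC : (A * C).trace = ∑ i, ∑ j, A i j * (starRingEnd ℂ) (C i j) := by
     rw [Matrix.trace]
     refine Finset.sum_congr rfl fun i _ => ?_
     rw [Matrix.diag_apply, Matrix.mul_apply]
     refine Finset.sum_congr rfl fun j _ => ?_
     have : (starRingEnd ℂ) (C i j) = C j i := by
       have := congrFun (congrFun hC.eq j) i
       rwa [Matrix.conjTranspose_apply] at this
     rw [this]
   have hBB : (B * Bᴴᵀ).trace = ∑ i, ∑ j, B i j * (starRingEnd ℂ) (B j i) := by
     rw [Matrix.trace]
     refine Finset.sum_congr rfl fun i _ => ?_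
     rw [Matrix.diag_apply, Matrix.mul_apply]
     refine Finset.sum_congr rfl fun j _ => ?_
     rw [Matrix.transpose_apply, Matrix.conjTranspose_apply]
     rfl
   have hre : 0 ≤ ((M * N).trace).re := (Complex.le_def.mp htr).1
   rw [htr2, hAC, hBB] at hre
   simp only [Complex.mul_re, Complex.sub_re, Complex.sub_im, Complex.re_ofNat,
     Complex.im_ofNat] at hre
   linarith)
end

section
/- Let V be a finite-dimensional complex inner product space and let u be a curvature-type tensor on V that is non-negative. Assume u(ξ, ξ, η, η) = 0 for some fixed ξ, η ∈ V. Then for any ℂ-linear endomorphisms a, b, c, d of V one has u(a ξ, ξ, η, η) + u(ξ, b ξ, η, η) + u(ξ, ξ, c η, η) + u(ξ, ξ, η, d η) = 0. (This is the vanishing of any first-order variation of u in its vector arguments at a zero of u.) -/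
/-- A *curvature-type tensor* on a complex inner product space `V`: a function
`u : V × V × V × V → ℂ` that is ℂ-linear in its first and third arguments,
conjugate-ℂ-linear in its second and fourth arguments, and satisfies the Hermitian
symmetry `u ξ η ζ ν = conj (u η ξ ν ζ)`. -/
structure CurvatureTensor (V : Type*) [NormedAddCommGroup V] [InnerProductSpace ℂ V] where
  u : V → V → V → V → ℂ
  add_fst : ∀ ξ ξ' η ζ ν, u (ξ + ξ') η ζ ν = u ξ η ζ ν + u ξ' η ζ ν
  smul_fst : ∀ (c : ℂ) ξ η ζ ν, u (c • ξ) η ζ ν = c * u ξ η ζ ν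
  add_snd : ∀ ξ η η' ζ ν, u ξ (η + η') ζ ν = u ξ η ζ ν + u ξ η' ζ ν
  smul_snd : ∀ (c : ℂ) ξ η ζ ν, u ξ (c • η) ζ ν = (starRingEnd ℂ) c * u ξ η ζ ν
  add_trd : ∀ ξ η ζ ζ' ν, u ξ η (ζ + ζ') ν = u ξ η ζ ν + u ξ η ζ' ν
  smul_trd : ∀ (c : ℂ) ξ η ζ ν, u ξ η (c • ζ) ν = c * u ξ η ζ ν
  add_fth : ∀ ξ η ζ ν ν', u ξ η ζ (ν + ν') = u ξ η ζ ν + u ξ η ζ ν'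
  smul_fth : ∀ (c : ℂ) ξ η ζ ν, u ξ η ζ (c • ν) = (starRingEnd ℂ) c * u ξ η ζ ν
  herm : ∀ ξ η ζ ν, u ξ η ζ ν = (starRingEnd ℂ) (u η ξ ν ζ)

open scoped ComplexOrder

/-- A real quadratic `t ↦ tA + t²B` with `B ≥ 0` that is nonnegative for all `t`
has vanishing linear coefficient. -/
lemma quad_aux (A B : ℝ) (hB : 0 ≤ B) (h : ∀ t : ℝ, 0 ≤ t * A + t ^ 2 * B) : A = 0 := by
  have hb1 : (0 : ℝ) < B + 1 := by linarith
  have h1 := h (-A / (B + 1))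
  have h2 : (-A / (B + 1)) * A + (-A / (B + 1)) ^ 2 * B = -A ^ 2 / (B + 1) ^ 2 := by
    field_simp
    ring
  rw [h2] at h1
  have h3 : (0:ℝ) < (B + 1) ^ 2 := by positivity
  have h4 : (0:ℝ) * (B + 1) ^ 2 ≤ -A ^ 2 := (le_div_iff₀ h3).mp h1
  nlinarith [sq_nonneg A]

lemma re_zero_of_slope (z B : ℂ) (hB : 0 ≤ B)
    (h : ∀ t : ℝ, 0 ≤ (t : ℂ) * (z + (starRingEnd ℂ) z) + (t : ℂ) ^ 2 * B) :
    z.re = 0 := by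
  have hBre : 0 ≤ B.re := (Complex.le_def.mp hB).1
  have key : (2 * z.re) = 0 := by
    apply quad_aux _ B.re hBre
    intro t
    have ht := (Complex.le_def.mp (h t)).1
    have : ((t : ℂ) * (z + (starRingEnd ℂ) z) + (t : ℂ) ^ 2 * B).re
        = t * (2 * z.re) + t ^ 2 * B.re := by
      rw [Complex.add_conj]
      simp only [pow_two, Complex.add_re, Complex.mul_re, Complex.mul_im,
        Complex.ofReal_re, Complex.ofReal_im]
      ring
    rw [this] at ht
    simpa using ht
  linarith

theorem key_fst {V : Type*} [NormedAddCommGroup V] [InnerProductSpace ℂ V]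
    (T : CurvatureTensor V)
    (hnonneg : ∀ ξ η : V, 0 ≤ T.u ξ ξ η η)
    (ξ η : V) (hzero : T.u ξ ξ η η = 0) (v : V) :
    T.u v ξ η η = 0 := by
  have expand : ∀ (w : V) (t : ℝ),
      T.u (ξ + (t : ℂ) • w) (ξ + (t : ℂ) • w) η η
        = (t : ℂ) * (T.u w ξ η η + (starRingEnd ℂ) (T.u w ξ η η))
          + (t : ℂ) ^ 2 * T.u w w η η := by
    intro w t
    have hconj : T.u ξ w η η = (starRingEnd ℂ) (T.u w ξ η η) := T.herm ξ w η η
    rw [T.add_fst, T.add_snd, T.add_snd, T.smul_fst, T.smul_snd, T.smul_snd, T.smul_fst,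
      hzero, hconj, Complex.conj_ofReal]
    ring
  have hre : ∀ w : V, (T.u w ξ η η).re = 0 := by
    intro w
    apply re_zero_of_slope _ (T.u w w η η) (hnonneg w η)
    intro t
    rw [← expand w t]
    exact hnonneg _ _
  have h1 := hre v
  have h2 := hre (Complex.I • v)
  rw [T.smul_fst] at h2
  simp [Complex.mul_re] at h2
  exact Complex.ext h1 h2

theorem key_trd {V : Type*} [NormedAddCommGroup V] [InnerProductSpace ℂ V]
    (T : CurvatureTensor V)
    (hnonneg : ∀ ξ η : V, 0 ≤ T.u ξ ξ η η)
    (ξ η : V) (hzero : T.u ξ ξ η η = 0) (w : V) :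
    T.u ξ ξ w η = 0 := by
  have expand : ∀ (w : V) (t : ℝ),
      T.u ξ ξ (η + (t : ℂ) • w) (η + (t : ℂ) • w)
        = (t : ℂ) * (T.u ξ ξ w η + (starRingEnd ℂ) (T.u ξ ξ w η))
          + (t : ℂ) ^ 2 * T.u ξ ξ w w := by
    intro w t
    have hconj : T.u ξ ξ η w = (starRingEnd ℂ) (T.u ξ ξ w η) := T.herm ξ ξ η w
    rw [T.add_trd, T.add_fth, T.add_fth, T.smul_trd, T.smul_fth, T.smul_fth, T.smul_trd,
      hzero, hconj, Complex.conj_ofReal]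
    ring
  have hre : ∀ w : V, (T.u ξ ξ w η).re = 0 := by
    intro w
    apply re_zero_of_slope _ (T.u ξ ξ w w) (hnonneg ξ w)
    intro t
    rw [← expand w t]
    exact hnonneg _ _
  have h1 := hre w
  have h2 := hre (Complex.I • w)
  rw [T.smul_trd] at h2
  simp [Complex.mul_re] at h2
  exact Complex.ext h1 h2

/-- **Vanishing of first-order variations at a zero of a non-negative curvature-type
tensor.** If `u ≥ 0` and `u(ξ, ξ̄, η, η̄) = 0`, then for any ℂ-linear endomorphisms
`a, b, c, d` of `V` one has
`u(aξ, ξ̄, η, η̄) + u(ξ, bξ̄, η, η̄) + u(ξ, ξ̄, cη, η̄) + u(ξ, ξ̄, η, dη̄) = 0`. -/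
theorem stmt4 {V : Type*} [NormedAddCommGroup V] [InnerProductSpace ℂ V]
    [FiniteDimensional ℂ V] (T : CurvatureTensor V)
    (hnonneg : ∀ ξ η : V, 0 ≤ T.u ξ ξ η η)
    (ξ η : V) (hzero : T.u ξ ξ η η = 0)
    (a b c d : V →ₗ[ℂ] V) :
    T.u (a ξ) ξ η η + T.u ξ (b ξ) η η + T.u ξ ξ (c η) η + T.u ξ ξ η (d η) = 0 := by
  have h1 : T.u (a ξ) ξ η η = 0 := key_fst T hnonneg ξ η hzero (a ξ)
  have h2 : T.u ξ (b ξ) η η = 0 := by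
    rw [T.herm, key_fst T hnonneg ξ η hzero (b ξ)]; simp
  have h3 : T.u ξ ξ (c η) η = 0 := key_trd T hnonneg ξ η hzero (c η)
  have h4 : T.u ξ ξ η (d η) = 0 := by
    rw [T.herm, key_trd T hnonneg ξ η hzero (d η)]; simp
  rw [h1, h2, h3, h4]; ring
end

section
/- Let u be a curvature-type tensor on ℂⁿ (with its standard Hermitian inner product) that is non-negative, and let e₁, …, eₙ be an orthonormal basis of ℂⁿ. Assume u(ξ, ξ, η, η) = 0 for some fixed ξ, η ∈ ℂⁿ. Then the (necessarily real) number Σ_{i,j} [ u(ξ, ξ, e_i, e_j)·u(e_j, e_i, η, η) − u(ξ, e_i, η, e_j)·u(e_j, ξ, e_i, η) ] is non-negative, i.e. Re( Σ_{i,j} [ u(ξ, ξ, e_i, e_j)·u(e_j, e_i, η, η) − u(ξ, e_i, η, e_j)·u(e_j, ξ, e_i, η) ] ) ≥ 0. -/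
open scoped ComplexOrder

open Matrix
open scoped Matrix
open scoped MatrixOrder

section Helpers
lemma poly_nonneg {Q R S : ℝ} (h : ∀ t : ℝ, 0 < t → 0 ≤ Q + t * R + t ^ 2 * S) : 0 ≤ Q := by
  have hcont : Continuous fun t : ℝ => Q + t * R + t ^ 2 * S := by continuity
  have hc : Filter.Tendsto (fun t : ℝ => Q + t * R + t ^ 2 * S)
      (nhdsWithin 0 (Set.Ioi 0)) (nhds Q) := by
    have := (hcont.tendsto 0).mono_left (nhdsWithin_le_nhds (s := Set.Ioi (0:ℝ)))
    simpa using this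
  refine ge_of_tendsto hc ?_
  exact Filter.eventually_iff_exists_mem.2 ⟨Set.Ioi 0, self_mem_nhdsWithin, fun t ht => h t ht⟩

lemma trace_conj_ineq {m : Type*} [Fintype m] (M : Matrix m m ℂ) :
    (Matrix.trace (M * M.map (starRingEnd ℂ))).re ≤ (Matrix.trace (Mᴴ * M)).re := by
  have h1 : (Matrix.trace (M * M.map (starRingEnd ℂ))).re
      = ∑ i, ∑ j, (M i j * (starRingEnd ℂ) (M j i)).re := by
    simp [Matrix.trace, Matrix.mul_apply, Matrix.diag, Complex.re_sum, Matrix.map_apply]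
  have h2 : (Matrix.trace (Mᴴ * M)).re = ∑ i, ∑ j, ‖M j i‖ ^ 2 := by
    simp [Matrix.trace, Matrix.mul_apply, Matrix.diag, Complex.re_sum,
      Matrix.conjTranspose_apply, ← Complex.normSq_eq_norm_sq, ← Complex.mul_conj',
      Complex.normSq_apply]
  rw [h1, h2]
  have key : ∀ i j, (M i j * (starRingEnd ℂ) (M j i)).re
      ≤ (‖M i j‖ ^ 2 + ‖M j i‖ ^ 2) / 2 := by
    intro i j
    have h3 := Complex.re_le_norm (M i j * (starRingEnd ℂ) (M j i))
    have habs : ‖M i j * (starRingEnd ℂ) (M j i)‖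
        = ‖M i j‖ * ‖M j i‖ := by
      simp [_root_.map_mul]
    nlinarith [sq_nonneg (‖M i j‖ - ‖M j i‖)]
  have swap : ∑ i, ∑ j, ‖M i j‖ ^ 2 = ∑ i, ∑ j, ‖M j i‖ ^ 2 :=
    Finset.sum_comm
  calc ∑ i, ∑ j, (M i j * (starRingEnd ℂ) (M j i)).re
      ≤ ∑ i, ∑ j, (‖M i j‖ ^ 2 + ‖M j i‖ ^ 2) / 2 :=
        Finset.sum_le_sum fun i _ => Finset.sum_le_sum fun j _ => key i j
    _ = ((∑ i, ∑ j, ‖M i j‖ ^ 2) + ∑ i, ∑ j, ‖M j i‖ ^ 2) / 2 := by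
        simp only [← Finset.sum_div, ← Finset.sum_add_distrib]
    _ = ∑ i, ∑ j, ‖M j i‖ ^ 2 := by rw [swap]; ring

variable {m : Type*} [Fintype m] [DecidableEq m]

variable {m : Type*} [Fintype m] [DecidableEq m]

lemma psd_diag_re_nonneg {M : Matrix m m ℂ} (hM : M.PosSemidef) (i : m) : 0 ≤ (M i i).re := by
  have h := hM.dotProduct_mulVec_nonneg (Pi.single i 1)
  have : star (Pi.single i 1) ⬝ᵥ M *ᵥ (Pi.single i 1) = M i i := by
    simp [Matrix.mulVec_single, dotProduct, Pi.single_apply]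
  rw [this] at h
  exact (Complex.nonneg_iff.mp h).1

lemma trace_psd_mul_psd {A B : Matrix m m ℂ} (hA : A.PosSemidef) (hB : B.PosSemidef) :
    0 ≤ (Matrix.trace (A * B)).re := by
  obtain ⟨L, hL⟩ := CStarAlgebra.nonneg_iff_eq_star_mul_self.mp hB.nonneg
  rw [star_eq_conjTranspose] at hL
  subst hL
  have h1 : Matrix.trace (A * (Lᴴ * L)) = Matrix.trace (L * A * Lᴴ) := by
    rw [Matrix.trace_mul_comm A (Lᴴ * L), Matrix.mul_assoc, Matrix.trace_mul_comm Lᴴ (L * A)]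
  rw [h1]
  have hpsd := hA.mul_mul_conjTranspose_same L
  rw [Matrix.trace, Complex.re_sum]
  exact Finset.sum_nonneg fun i _ => psd_diag_re_nonneg hpsd i

lemma dot_mulVec_helper (X Y : Matrix m m ℂ) (d e : m → ℂ) :
    star (X *ᵥ d) ⬝ᵥ Y *ᵥ e = star d ⬝ᵥ (Xᴴ * Y) *ᵥ e := by
  rw [star_mulVec, ← Matrix.dotProduct_mulVec, Matrix.mulVec_mulVec]

lemma conj_map_mul (M K : Matrix m m ℂ) :
    (M * K).map (starRingEnd ℂ) = M.map (starRingEnd ℂ) * K.map (starRingEnd ℂ) :=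
  Matrix.map_mul

lemma conj_map_conj_map (M : Matrix m m ℂ) :
    (M.map (starRingEnd ℂ)).map (starRingEnd ℂ) = M := by
  ext i j; simp

lemma conj_map_inv (M : Matrix m m ℂ) (h : IsUnit M.det) :
    (M⁻¹).map (starRingEnd ℂ) = (M.map (starRingEnd ℂ))⁻¹ := by
  refine (Matrix.inv_eq_left_inv ?_).symm
  rw [← conj_map_mul, Matrix.nonsing_inv_mul _ h]
  ext i j
  simp [Matrix.one_apply, apply_ite]

lemma isHermitian_map_conj {M : Matrix m m ℂ} (h : M.IsHermitian) :
    M.map (starRingEnd ℂ) = Mᵀ := by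
  ext i j
  simpa [Matrix.map_apply, Matrix.conjTranspose_apply] using congrFun (congrFun h.eq j) i

lemma matrix_key (P Q N : Matrix m m ℂ)
    (hP : P.PosSemidef) (hQ : Q.PosSemidef)
    (hkey : ∀ c d : m → ℂ,
      0 ≤ (star c ⬝ᵥ P *ᵥ c).re + (star d ⬝ᵥ Q *ᵥ d).re + 2 * (star c ⬝ᵥ N *ᵥ d).re) :
    (Matrix.trace (N * N.map (starRingEnd ℂ))).re ≤ (Matrix.trace (Pᵀ * Q)).re := by
  have main : ∀ ε : ℝ, 0 < ε →
      (Matrix.trace (N * N.map (starRingEnd ℂ))).re ≤ (Matrix.trace (Pᵀ * Q)).re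
        + ε * ((Matrix.trace P).re + (Matrix.trace Q).re) + ε ^ 2 * (Fintype.card m : ℝ) := by
    intro ε hε
    set P' : Matrix m m ℂ := P + (ε : ℂ) • (1 : Matrix m m ℂ) with hP'def
    set Q' : Matrix m m ℂ := Q + (ε : ℂ) • (1 : Matrix m m ℂ) with hQ'def
    have hone : ((ε : ℂ) • (1 : Matrix m m ℂ)).PosDef := by
      rw [Matrix.smul_one_eq_diagonal]
      exact Matrix.PosDef.diagonal fun _ => by
        simpa using (Complex.zero_lt_real.mpr hε)
    have hP' : P'.PosDef := Matrix.PosDef.posSemidef_add hP hone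
    have hQ' : Q'.PosDef := Matrix.PosDef.posSemidef_add hQ hone
    have hP'u : IsUnit P'.det := (Matrix.isUnit_iff_isUnit_det _).mp hP'.isUnit
    -- extended key inequality
    have hkey' : ∀ c d : m → ℂ,
        0 ≤ (star c ⬝ᵥ P' *ᵥ c).re + (star d ⬝ᵥ Q' *ᵥ d).re + 2 * (star c ⬝ᵥ N *ᵥ d).re := by
      intro c d
      have h0 := hkey c d
      have hc : (star c ⬝ᵥ P' *ᵥ c).re
          = (star c ⬝ᵥ P *ᵥ c).re + ε * (star c ⬝ᵥ c).re := by
        rw [hP'def, Matrix.add_mulVec, dotProduct_add, Matrix.smul_mulVec,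
          Matrix.one_mulVec, dotProduct_smul]
        simp [Complex.re_ofReal_mul]
      have hd : (star d ⬝ᵥ Q' *ᵥ d).re
          = (star d ⬝ᵥ Q *ᵥ d).re + ε * (star d ⬝ᵥ d).re := by
        rw [hQ'def, Matrix.add_mulVec, dotProduct_add, Matrix.smul_mulVec,
          Matrix.one_mulVec, dotProduct_smul]
        simp [Complex.re_ofReal_mul]
      have hcc : 0 ≤ (star c ⬝ᵥ c).re :=
        (Complex.nonneg_iff.mp (dotProduct_star_self_nonneg c)).1
      have hdd : 0 ≤ (star d ⬝ᵥ d).re :=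
        (Complex.nonneg_iff.mp (dotProduct_star_self_nonneg d)).1
      rw [hc, hd]
      nlinarith
    -- Schur complement positivity
    set R0 : Matrix m m ℂ := Q' - Nᴴ * P'⁻¹ * N with hR0def
    have hinv : P'⁻¹.PosDef := hP'.inv
    have hWherm : (Nᴴ * P'⁻¹ * N).IsHermitian := by
      have : (Nᴴ * P'⁻¹ * N)ᴴ = Nᴴ * P'⁻¹ * N := by
        rw [Matrix.conjTranspose_mul, Matrix.conjTranspose_mul,
          Matrix.conjTranspose_conjTranspose, hinv.isHermitian.eq, Matrix.mul_assoc]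
      exact this
    have hR0 : R0.PosSemidef := by
      refine Matrix.PosSemidef.of_dotProduct_mulVec_nonneg ?_ ?_
      · exact hQ'.isHermitian.sub hWherm
      · intro d
        set c0 : m → ℂ := -((P'⁻¹ * N) *ᵥ d) with hc0def
        have hmat : (P'⁻¹ * N)ᴴ * (P' * (P'⁻¹ * N)) = Nᴴ * P'⁻¹ * N := by
          rw [Matrix.mul_nonsing_inv_cancel_left _ _ hP'u, Matrix.conjTranspose_mul,
            hinv.isHermitian.eq, Matrix.mul_assoc]
        have e1 : star c0 ⬝ᵥ P' *ᵥ c0 = star d ⬝ᵥ (Nᴴ * P'⁻¹ * N) *ᵥ d := by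
          rw [hc0def, star_neg, neg_dotProduct, Matrix.mulVec_neg,
            dotProduct_neg, neg_neg, Matrix.mulVec_mulVec,
            dot_mulVec_helper, hmat]
        have e2 : star c0 ⬝ᵥ N *ᵥ d = -(star d ⬝ᵥ (Nᴴ * P'⁻¹ * N) *ᵥ d) := by
          rw [hc0def, star_neg, neg_dotProduct, dot_mulVec_helper,
            Matrix.conjTranspose_mul, hinv.isHermitian.eq, Matrix.mul_assoc]
        have h3 := hkey' c0 d
        rw [e1, e2] at h3
        have e4 : star d ⬝ᵥ R0 *ᵥ d
            = star d ⬝ᵥ Q' *ᵥ d - star d ⬝ᵥ (Nᴴ * P'⁻¹ * N) *ᵥ d := by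
          rw [hR0def, Matrix.sub_mulVec, dotProduct_sub]
        -- realness: both dotProducts against Hermitian matrices are real
        have hreal : ∀ (M : Matrix m m ℂ), M.IsHermitian → ∀ x : m → ℂ,
            ((star x ⬝ᵥ M *ᵥ x)).im = 0 := by
          intro M hM x
          have h5 : (starRingEnd ℂ) (star x ⬝ᵥ M *ᵥ x) = star x ⬝ᵥ M *ᵥ x := by
            have : (starRingEnd ℂ) (star x ⬝ᵥ M *ᵥ x) = star (star x ⬝ᵥ M *ᵥ x) := rfl
            rw [this, ← Matrix.star_dotProduct, Matrix.star_mulVec,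
              ← Matrix.dotProduct_mulVec, hM.eq]
          exact Complex.conj_eq_iff_im.mp h5
        rw [Complex.nonneg_iff]
        constructor
        · rw [e4, Complex.sub_re]
          simp only [Complex.neg_re] at h3
          linarith
        · rw [e4, Complex.sub_im, hreal _ hQ'.isHermitian d, hreal _ hWherm d]
          simp
    -- trace chain
    set S : Matrix m m ℂ := CFC.sqrt P' with hSdef
    have hSS : S * S = P' := CFC.sqrt_mul_sqrt_self P' hP'.posSemidef.nonneg
    have hSH : S.IsHermitian := (CFC.sqrt_nonneg P').posSemidef.isHermitian
    have hSu : IsUnit S.det := by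
      have h2 : S.det * S.det = P'.det := by rw [← Matrix.det_mul, hSS]
      have h3 : P'.det ≠ 0 := hP'.det_pos.ne'
      rw [isUnit_iff_ne_zero]
      intro h6
      rw [h6, zero_mul] at h2
      exact h3 h2.symm
    set Sc : Matrix m m ℂ := S.map (starRingEnd ℂ) with hScdef
    have hScS : Sc = Sᵀ := isHermitian_map_conj hSH
    have hScu : IsUnit Sc.det := by rw [hScS, Matrix.det_transpose]; exact hSu
    set W : Matrix m m ℂ := S⁻¹ * N * Sc with hWdef
    set Nc : Matrix m m ℂ := N.map (starRingEnd ℂ) with hNcdef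
    -- Claim A : trace (W * Wc) = trace (N * Nc)
    have hWc : W.map (starRingEnd ℂ) = Sc⁻¹ * Nc * S := by
      rw [hWdef, conj_map_mul, conj_map_mul, conj_map_inv _ hSu, conj_map_conj_map,
        ← hScdef, ← hNcdef]
    have claimA : Matrix.trace (W * W.map (starRingEnd ℂ)) = Matrix.trace (N * Nc) := by
      rw [hWc, hWdef]
      have h8 : S⁻¹ * N * Sc * (Sc⁻¹ * Nc * S) = S⁻¹ * (N * Nc * S) := by
        simp only [Matrix.mul_assoc]
        rw [Matrix.mul_nonsing_inv_cancel_left _ _ hScu]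
      rw [h8, Matrix.trace_mul_comm, Matrix.mul_nonsing_inv_cancel_right _ _ hSu]
    -- Claim C : trace (Wᴴ * W) = trace (P'ᵀ * (Nᴴ * P'⁻¹ * N))
    have hSinvH : (S⁻¹)ᴴ = S⁻¹ := by rw [Matrix.conjTranspose_nonsing_inv, hSH.eq]
    have hScH : Scᴴ = Sc := by
      rw [hScdef]
      ext i j
      simp only [Matrix.conjTranspose_apply, Matrix.map_apply]
      rw [← hSH.apply i j]
      simp
    have claimC : Matrix.trace (Wᴴ * W) = Matrix.trace (P'ᵀ * (Nᴴ * P'⁻¹ * N)) := by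
      have hWH : Wᴴ = Sc * Nᴴ * S⁻¹ := by
        rw [hWdef, Matrix.conjTranspose_mul, Matrix.conjTranspose_mul, hSinvH, hScH,
          Matrix.mul_assoc, ← Matrix.mul_assoc]
      have hSS' : Sc * Sc = P'ᵀ := by
        rw [hScS, ← Matrix.transpose_mul, hSS]
      have hinv2 : S⁻¹ * S⁻¹ = P'⁻¹ := by
        rw [← Matrix.mul_inv_rev, hSS]
      rw [hWH, hWdef]
      have h9 : Sc * Nᴴ * S⁻¹ * (S⁻¹ * N * Sc) = Sc * (Nᴴ * (P'⁻¹ * (N * Sc))) := by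
        simp only [Matrix.mul_assoc]
        rw [← Matrix.mul_assoc S⁻¹ S⁻¹ (N * Sc), hinv2]
      rw [h9, Matrix.trace_mul_comm, Matrix.trace_mul_comm P'ᵀ (Nᴴ * P'⁻¹ * N), ← hSS']
      simp only [Matrix.mul_assoc]
    -- Claim E : trace (P'ᵀ * R0) has nonneg re
    have claimE : 0 ≤ (Matrix.trace (P'ᵀ * R0)).re :=
      trace_psd_mul_psd hP'.posSemidef.transpose hR0
    -- Claim F : expansion of trace (P'ᵀ * Q')
    have claimF : (Matrix.trace (P'ᵀ * Q')).re = (Matrix.trace (Pᵀ * Q)).re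
        + ε * ((Matrix.trace P).re + (Matrix.trace Q).re) + ε ^ 2 * (Fintype.card m : ℝ) := by
      have hexp : P'ᵀ * Q' = Pᵀ * Q + (ε : ℂ) • Pᵀ + (ε : ℂ) • Q + ((ε : ℂ) * ε) • 1 := by
        rw [hP'def, hQ'def, Matrix.transpose_add, Matrix.transpose_smul, Matrix.transpose_one]
        rw [Matrix.add_mul, Matrix.mul_add, Matrix.mul_add]
        rw [Matrix.mul_smul, Matrix.mul_one, Matrix.smul_mul, Matrix.one_mul,
          Matrix.smul_mul, Matrix.mul_smul, smul_smul, Matrix.one_mul]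
        abel
      rw [hexp]
      simp only [Matrix.trace_add, Matrix.trace_smul, Matrix.trace_one, Matrix.trace_transpose,
        Complex.add_re, smul_eq_mul]
      rw [← Complex.ofReal_mul]
      simp [Complex.re_ofReal_mul]
      ring
    -- combine
    have step1 : (Matrix.trace (N * Nc)).re ≤ (Matrix.trace (P'ᵀ * (Nᴴ * P'⁻¹ * N))).re := by
      rw [← claimA, ← claimC]
      exact trace_conj_ineq W
    have step2 : (Matrix.trace (P'ᵀ * (Nᴴ * P'⁻¹ * N))).re ≤ (Matrix.trace (P'ᵀ * Q')).re := by
      have : Matrix.trace (P'ᵀ * Q') - Matrix.trace (P'ᵀ * (Nᴴ * P'⁻¹ * N))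
          = Matrix.trace (P'ᵀ * R0) := by
        rw [hR0def, Matrix.mul_sub, Matrix.trace_sub]
      have h7 : (Matrix.trace (P'ᵀ * Q')).re - (Matrix.trace (P'ᵀ * (Nᴴ * P'⁻¹ * N))).re
          = (Matrix.trace (P'ᵀ * R0)).re := by
        rw [← this, Complex.sub_re]
      linarith [claimE]
    rw [← claimF]
    exact le_trans step1 step2
  -- limit as ε → 0
  have := poly_nonneg (Q := (Matrix.trace (Pᵀ * Q)).re - (Matrix.trace (N * N.map (starRingEnd ℂ))).re)
    (R := (Matrix.trace P).re + (Matrix.trace Q).re) (S := (Fintype.card m : ℝ))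
    (fun t ht => by have := main t ht; linarith)
  linarith

end Helpers

namespace CurvatureTensor

variable {V : Type*} [NormedAddCommGroup V] [InnerProductSpace ℂ V] (T : CurvatureTensor V)

lemma zero_fst (y z w : V) : T.u 0 y z w = 0 := by
  simpa using T.smul_fst 0 0 y z w

lemma zero_snd (x z w : V) : T.u x 0 z w = 0 := by
  simpa using T.smul_snd 0 x 0 z w

lemma zero_trd (x y w : V) : T.u x y 0 w = 0 := by
  simpa using T.smul_trd 0 x y 0 w

lemma zero_fth (x y z : V) : T.u x y z 0 = 0 := by
  simpa using T.smul_fth 0 x y z 0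

lemma sum_fst {ι : Type*} (s : Finset ι) (g : ι → V) (y z w : V) :
    T.u (∑ i ∈ s, g i) y z w = ∑ i ∈ s, T.u (g i) y z w := by
  classical
  induction s using Finset.induction_on with
  | empty => simpa using T.zero_fst y z w
  | insert _ _ h ih => rw [Finset.sum_insert h, T.add_fst, ih, Finset.sum_insert h]

lemma sum_snd {ι : Type*} (x : V) (s : Finset ι) (g : ι → V) (z w : V) :
    T.u x (∑ i ∈ s, g i) z w = ∑ i ∈ s, T.u x (g i) z w := by
  classical
  induction s using Finset.induction_on with
  | empty => simpa using T.zero_snd x z w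
  | insert _ _ h ih => rw [Finset.sum_insert h, T.add_snd, ih, Finset.sum_insert h]

lemma sum_trd {ι : Type*} (x y : V) (s : Finset ι) (g : ι → V) (w : V) :
    T.u x y (∑ i ∈ s, g i) w = ∑ i ∈ s, T.u x y (g i) w := by
  classical
  induction s using Finset.induction_on with
  | empty => simpa using T.zero_trd x y w
  | insert _ _ h ih => rw [Finset.sum_insert h, T.add_trd, ih, Finset.sum_insert h]

lemma sum_fth {ι : Type*} (x y z : V) (s : Finset ι) (g : ι → V) :
    T.u x y z (∑ i ∈ s, g i) = ∑ i ∈ s, T.u x y z (g i) := by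
  classical
  induction s using Finset.induction_on with
  | empty => simpa using T.zero_fth x y z
  | insert _ _ h ih => rw [Finset.sum_insert h, T.add_fth, ih, Finset.sum_insert h]

lemma expand12 {ι : Type*} [Fintype ι] (a b : ι → ℂ) (v : ι → V) (z w : V) :
    T.u (∑ p, a p • v p) (∑ q, b q • v q) z w
      = ∑ p, ∑ q, a p * (starRingEnd ℂ) (b q) * T.u (v p) (v q) z w := by
  rw [T.sum_fst]
  refine Finset.sum_congr rfl fun p _ => ?_
  rw [T.smul_fst, T.sum_snd, Finset.mul_sum]
  refine Finset.sum_congr rfl fun q _ => ?_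
  rw [T.smul_snd]; ring

lemma expand34 {ι : Type*} [Fintype ι] (x y : V) (a b : ι → ℂ) (v : ι → V) :
    T.u x y (∑ p, a p • v p) (∑ q, b q • v q)
      = ∑ p, ∑ q, a p * (starRingEnd ℂ) (b q) * T.u x y (v p) (v q) := by
  rw [T.sum_trd]
  refine Finset.sum_congr rfl fun p _ => ?_
  rw [T.smul_trd, T.sum_fth, Finset.mul_sum]
  refine Finset.sum_congr rfl fun q _ => ?_
  rw [T.smul_fth]; ring

lemma expand13 {ι : Type*} [Fintype ι] (y w : V) (a b : ι → ℂ) (v : ι → V) :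
    T.u (∑ p, a p • v p) y (∑ q, b q • v q) w
      = ∑ p, ∑ q, a p * b q * T.u (v p) y (v q) w := by
  rw [T.sum_fst]
  refine Finset.sum_congr rfl fun p _ => ?_
  rw [T.smul_fst, T.sum_trd, Finset.mul_sum]
  refine Finset.sum_congr rfl fun q _ => ?_
  rw [T.smul_trd]; ring

variable {ξ η : V}

lemma first_var_fst (hnonneg : ∀ a b : V, 0 ≤ T.u a a b b)
    (hzero : T.u ξ ξ η η = 0) (α : V) : T.u α ξ η η = 0 := by
  set w := T.u α ξ η η with hw
  have hconj : T.u ξ α η η = (starRingEnd ℂ) w := T.herm ξ α η η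
  have hs := Complex.nonneg_iff.mp (hnonneg α η)
  set s := (T.u α α η η).re with hsdef
  have huaa : T.u α α η η = (s : ℂ) := by
    apply Complex.ext
    · simp [hsdef]
    · simpa using hs.2.symm
  have hexp : ∀ z : ℂ, T.u (ξ + z • α) (ξ + z • α) η η
      = z * w + (starRingEnd ℂ) (z * w) + z * (starRingEnd ℂ) z * T.u α α η η := by
    intro z
    simp only [T.add_fst, T.add_snd, T.smul_fst, T.smul_snd, hzero, hconj, ← hw, _root_.map_mul]
    ring
  have hineq : ∀ t : ℝ, 0 < t →
      0 ≤ -(2 * Complex.normSq w) + t * (Complex.normSq w * s) := by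
    intro t ht
    have h0 := hnonneg (ξ + (-(t : ℂ) * (starRingEnd ℂ) w) • α) η
    rw [hexp] at h0
    set z := -(t : ℂ) * (starRingEnd ℂ) w with hzdef
    have hz1 : z * w = ((-(t * Complex.normSq w) : ℝ) : ℂ) := by
      have hcw : (starRingEnd ℂ) w * w = (Complex.normSq w : ℂ) := by
        rw [mul_comm, Complex.mul_conj]
      calc z * w = -(t : ℂ) * ((starRingEnd ℂ) w * w) := by rw [hzdef]; ring
        _ = ((-(t * Complex.normSq w) : ℝ) : ℂ) := by rw [hcw]; push_cast; ring
    have hz2 : z * (starRingEnd ℂ) z = ((t ^ 2 * Complex.normSq w : ℝ) : ℂ) := by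
      have hnz : Complex.normSq z = t ^ 2 * Complex.normSq w := by
        rw [hzdef, Complex.normSq_mul, Complex.normSq_neg, Complex.normSq_conj,
          Complex.normSq_ofReal]
        ring
      rw [Complex.mul_conj, hnz]
    rw [hz1, hz2, huaa] at h0
    have h2 : (((-(t * Complex.normSq w) : ℝ) : ℂ)) + (starRingEnd ℂ) ((-(t * Complex.normSq w) : ℝ) : ℂ)
        + ((t ^ 2 * Complex.normSq w : ℝ) : ℂ) * (s : ℂ)
        = (((-(t * Complex.normSq w) + -(t * Complex.normSq w)
            + t ^ 2 * Complex.normSq w * s : ℝ)) : ℂ) := by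
      rw [Complex.conj_ofReal]
      push_cast
      ring
    rw [h2] at h0
    have h1 := Complex.zero_le_real.mp h0
    nlinarith
  have h2 := poly_nonneg (Q := -(2 * Complex.normSq w)) (R := Complex.normSq w * s) (S := 0)
    (fun t ht => by simpa using hineq t ht)
  have h3 : Complex.normSq w = 0 := by nlinarith [Complex.normSq_nonneg w]
  rw [hw]
  exact Complex.normSq_eq_zero.mp h3

lemma first_var_trd (hnonneg : ∀ a b : V, 0 ≤ T.u a a b b)
    (hzero : T.u ξ ξ η η = 0) (β : V) : T.u ξ ξ β η = 0 := by
  set w := T.u ξ ξ β η with hw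
  have hconj : T.u ξ ξ η β = (starRingEnd ℂ) w := T.herm ξ ξ η β
  have hs := Complex.nonneg_iff.mp (hnonneg ξ β)
  set s := (T.u ξ ξ β β).re with hsdef
  have huaa : T.u ξ ξ β β = (s : ℂ) := by
    apply Complex.ext
    · simp [hsdef]
    · simpa using hs.2.symm
  have hexp : ∀ z : ℂ, T.u ξ ξ (η + z • β) (η + z • β)
      = z * w + (starRingEnd ℂ) (z * w) + z * (starRingEnd ℂ) z * T.u ξ ξ β β := by
    intro z
    simp only [T.add_trd, T.add_fth, T.smul_trd, T.smul_fth, hzero, hconj, ← hw, _root_.map_mul]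
    ring
  have hineq : ∀ t : ℝ, 0 < t →
      0 ≤ -(2 * Complex.normSq w) + t * (Complex.normSq w * s) := by
    intro t ht
    have h0 := hnonneg ξ (η + (-(t : ℂ) * (starRingEnd ℂ) w) • β)
    rw [hexp] at h0
    set z := -(t : ℂ) * (starRingEnd ℂ) w with hzdef
    have hz1 : z * w = ((-(t * Complex.normSq w) : ℝ) : ℂ) := by
      have hcw : (starRingEnd ℂ) w * w = (Complex.normSq w : ℂ) := by
        rw [mul_comm, Complex.mul_conj]
      calc z * w = -(t : ℂ) * ((starRingEnd ℂ) w * w) := by rw [hzdef]; ring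
        _ = ((-(t * Complex.normSq w) : ℝ) : ℂ) := by rw [hcw]; push_cast; ring
    have hz2 : z * (starRingEnd ℂ) z = ((t ^ 2 * Complex.normSq w : ℝ) : ℂ) := by
      have hnz : Complex.normSq z = t ^ 2 * Complex.normSq w := by
        rw [hzdef, Complex.normSq_mul, Complex.normSq_neg, Complex.normSq_conj,
          Complex.normSq_ofReal]
        ring
      rw [Complex.mul_conj, hnz]
    rw [hz1, hz2, huaa] at h0
    have h2 : (((-(t * Complex.normSq w) : ℝ) : ℂ)) + (starRingEnd ℂ) ((-(t * Complex.normSq w) : ℝ) : ℂ)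
        + ((t ^ 2 * Complex.normSq w : ℝ) : ℂ) * (s : ℂ)
        = (((-(t * Complex.normSq w) + -(t * Complex.normSq w)
            + t ^ 2 * Complex.normSq w * s : ℝ)) : ℂ) := by
      rw [Complex.conj_ofReal]
      push_cast
      ring
    rw [h2] at h0
    have h1 := Complex.zero_le_real.mp h0
    nlinarith
  have h2 := poly_nonneg (Q := -(2 * Complex.normSq w)) (R := Complex.normSq w * s) (S := 0)
    (fun t ht => by simpa using hineq t ht)
  have h3 : Complex.normSq w = 0 := by nlinarith [Complex.normSq_nonneg w]
  rw [hw]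
  exact Complex.normSq_eq_zero.mp h3

lemma second_var (hnonneg : ∀ a b : V, 0 ≤ T.u a a b b)
    (hzero : T.u ξ ξ η η = 0) (α β : V) :
    0 ≤ (T.u α α η η + T.u ξ ξ β β + T.u α ξ β η + T.u α ξ η β
        + T.u ξ α β η + T.u ξ α η β).re := by
  have L1 : T.u α ξ η η = 0 := T.first_var_fst hnonneg hzero α
  have L1c : T.u ξ α η η = 0 := by rw [T.herm ξ α η η, L1]; simp
  have L2 : T.u ξ ξ β η = 0 := T.first_var_trd hnonneg hzero β
  have L2c : T.u ξ ξ η β = 0 := by rw [T.herm ξ ξ η β, L2]; simp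
  have hexp : ∀ t : ℝ, T.u (ξ + (t : ℂ) • α) (ξ + (t : ℂ) • α) (η + (t : ℂ) • β) (η + (t : ℂ) • β)
      = ((t ^ 2 : ℝ) : ℂ) * (T.u α α η η + T.u ξ ξ β β + T.u α ξ β η + T.u α ξ η β
          + T.u ξ α β η + T.u ξ α η β)
        + ((t ^ 3 : ℝ) : ℂ) * (T.u α α β η + T.u α α η β + T.u α ξ β β + T.u ξ α β β)
        + ((t ^ 4 : ℝ) : ℂ) * T.u α α β β := by
    intro t
    simp only [T.add_fst, T.add_snd, T.add_trd, T.add_fth, T.smul_fst, T.smul_snd,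
      T.smul_trd, T.smul_fth, hzero, L1, L1c, L2, L2c, Complex.conj_ofReal,
      mul_zero, zero_add, add_zero]
    push_cast
    ring
  have hineq : ∀ t : ℝ, 0 < t →
      0 ≤ (T.u α α η η + T.u ξ ξ β β + T.u α ξ β η + T.u α ξ η β
          + T.u ξ α β η + T.u ξ α η β).re
        + t * (T.u α α β η + T.u α α η β + T.u α ξ β β + T.u ξ α β β).re
        + t ^ 2 * (T.u α α β β).re := by
    intro t ht
    have h0 := hnonneg (ξ + (t : ℂ) • α) (η + (t : ℂ) • β)
    rw [hexp t] at h0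
    have h1 := (Complex.nonneg_iff.mp h0).1
    simp only [Complex.add_re, Complex.re_ofReal_mul] at h1
    simp only [Complex.add_re]
    by_contra hcon
    push_neg at hcon
    nlinarith [mul_pos ht ht]
  exact poly_nonneg (fun t ht => by simpa using hineq t ht)

lemma key_ineq (hnonneg : ∀ a b : V, 0 ≤ T.u a a b b)
    (hzero : T.u ξ ξ η η = 0) (α β : V) :
    0 ≤ (T.u α α η η).re + (T.u ξ ξ β β).re + 2 * (T.u α ξ β η).re := by
  have h1 := T.second_var hnonneg hzero α β
  have h2 := T.second_var hnonneg hzero (Complex.I • α) ((-Complex.I) • β)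
  have e1 : T.u (Complex.I • α) (Complex.I • α) η η = T.u α α η η := by
    rw [T.smul_fst, T.smul_snd, Complex.conj_I]
    linear_combination (-(T.u α α η η)) * Complex.I_mul_I
  have e2 : T.u ξ ξ ((-Complex.I) • β) ((-Complex.I) • β) = T.u ξ ξ β β := by
    rw [T.smul_trd, T.smul_fth, map_neg, Complex.conj_I]
    linear_combination (-(T.u ξ ξ β β)) * Complex.I_mul_I
  have e3 : T.u (Complex.I • α) ξ ((-Complex.I) • β) η = T.u α ξ β η := by
    rw [T.smul_fst, T.smul_trd]
    linear_combination (-(T.u α ξ β η)) * Complex.I_mul_I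
  have e4 : T.u (Complex.I • α) ξ η ((-Complex.I) • β) = -T.u α ξ η β := by
    rw [T.smul_fst, T.smul_fth, map_neg, Complex.conj_I]
    linear_combination (T.u α ξ η β) * Complex.I_mul_I
  have e5 : T.u ξ (Complex.I • α) ((-Complex.I) • β) η = -T.u ξ α β η := by
    rw [T.smul_snd, T.smul_trd, Complex.conj_I]
    linear_combination (T.u ξ α β η) * Complex.I_mul_I
  have e6 : T.u ξ (Complex.I • α) η ((-Complex.I) • β) = T.u ξ α η β := by
    rw [T.smul_snd, T.smul_fth, Complex.conj_I, map_neg, Complex.conj_I]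
    linear_combination (-(T.u ξ α η β)) * Complex.I_mul_I
  rw [e1, e2, e3, e4, e5, e6] at h2
  have hherm : T.u ξ α η β = (starRingEnd ℂ) (T.u α ξ β η) := T.herm ξ α η β
  have hre : (T.u ξ α η β).re = (T.u α ξ β η).re := by rw [hherm, Complex.conj_re]
  simp only [Complex.add_re, Complex.neg_re, Complex.sub_re] at h1 h2
  linarith

end CurvatureTensor

/-- **Non-negativity of the quadratic term at a zero (Corollary `cor:var_fiber`).**
If a curvature-type tensor `u` on `ℂⁿ` is non-negative and `u(ξ, ξ̄, η, η̄) = 0`, then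
for any orthonormal basis `e₁, …, eₙ` of `ℂⁿ`
`Re Σ_{i,j} [ u(ξ, ξ̄, eᵢ, ēⱼ) u(eⱼ, ēᵢ, η, η̄) − u(ξ, ēᵢ, η, ēⱼ) u(eⱼ, ξ̄, eᵢ, η̄) ] ≥ 0`. -/
theorem stmt8 {n : ℕ} (T : CurvatureTensor (EuclideanSpace ℂ (Fin n)))
    (e : OrthonormalBasis (Fin n) ℂ (EuclideanSpace ℂ (Fin n)))
    (hnonneg : ∀ ξ η : EuclideanSpace ℂ (Fin n), 0 ≤ T.u ξ ξ η η)
    (ξ η : EuclideanSpace ℂ (Fin n)) (hzero : T.u ξ ξ η η = 0) :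
    0 ≤ (∑ i, ∑ j, (T.u ξ ξ (e i) (e j) * T.u (e j) (e i) η η
        - T.u ξ (e i) η (e j) * T.u (e j) ξ (e i) η)).re := by
  classical
  set A : Matrix (Fin n) (Fin n) ℂ := Matrix.of fun i j => T.u ξ ξ (e i) (e j) with hA
  set B : Matrix (Fin n) (Fin n) ℂ := Matrix.of fun i j => T.u (e i) (e j) η η with hB
  set N : Matrix (Fin n) (Fin n) ℂ := Matrix.of fun i j => T.u (e i) ξ (e j) η with hN
  -- quadratic-form identifications
  have hBdot : ∀ x : Fin n → ℂ, star x ⬝ᵥ B *ᵥ x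
      = T.u (∑ p, (starRingEnd ℂ) (x p) • e p) (∑ q, (starRingEnd ℂ) (x q) • e q) η η := by
    intro x
    rw [T.expand12]
    simp only [dotProduct, Matrix.mulVec, Pi.star_apply, hB, Matrix.of_apply,
      RCLike.star_def, starRingEnd_self_apply, Finset.mul_sum]
    exact Finset.sum_congr rfl fun p _ => Finset.sum_congr rfl fun q _ => by ring
  have hAdot : ∀ x : Fin n → ℂ, star x ⬝ᵥ Aᵀ *ᵥ x
      = T.u ξ ξ (∑ p, x p • e p) (∑ q, x q • e q) := by
    intro x
    rw [T.expand34]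
    rw [Finset.sum_comm]
    simp only [dotProduct, Matrix.mulVec, Pi.star_apply, hA, Matrix.of_apply,
      Matrix.transpose_apply, RCLike.star_def, Finset.mul_sum]
    exact Finset.sum_congr rfl fun p _ => Finset.sum_congr rfl fun q _ => by ring
  have hNdot : ∀ c d : Fin n → ℂ, star c ⬝ᵥ N *ᵥ d
      = T.u (∑ p, (starRingEnd ℂ) (c p) • e p) ξ (∑ q, d q • e q) η := by
    intro c d
    rw [T.expand13]
    simp only [dotProduct, Matrix.mulVec, Pi.star_apply, hN, Matrix.of_apply,
      RCLike.star_def, Finset.mul_sum]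
    exact Finset.sum_congr rfl fun p _ => Finset.sum_congr rfl fun q _ => by ring
  -- positive semidefiniteness
  have hBpsd : B.PosSemidef := by
    refine Matrix.PosSemidef.of_dotProduct_mulVec_nonneg ?_ ?_
    · ext i j
      simp only [Matrix.conjTranspose_apply, hB, Matrix.of_apply]
      rw [T.herm (e j) (e i) η η]
      simp
    · intro x
      rw [hBdot x]
      exact hnonneg _ _
  have hApsd : Aᵀ.PosSemidef := by
    refine Matrix.PosSemidef.of_dotProduct_mulVec_nonneg ?_ ?_
    · ext i j
      simp only [Matrix.conjTranspose_apply, Matrix.transpose_apply, hA, Matrix.of_apply]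
      rw [T.herm ξ ξ (e j) (e i)]
      simp
    · intro x
      rw [hAdot x]
      exact hnonneg _ _
  -- the key inequality in matrix form
  have hkey : ∀ c d : Fin n → ℂ,
      0 ≤ (star c ⬝ᵥ B *ᵥ c).re + (star d ⬝ᵥ Aᵀ *ᵥ d).re + 2 * (star c ⬝ᵥ N *ᵥ d).re := by
    intro c d
    have h := T.key_ineq hnonneg hzero (∑ p, (starRingEnd ℂ) (c p) • e p) (∑ q, d q • e q)
    rw [← hBdot c, ← hAdot d, ← hNdot c d] at h
    exact h
  have hmk := matrix_key B Aᵀ N hBpsd hApsd hkey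
  have htr : (Matrix.trace (Bᵀ * Aᵀ)).re = (Matrix.trace (A * B)).re := by
    rw [← Matrix.transpose_mul, Matrix.trace_transpose]
  -- rewrite the goal
  have h1 : Matrix.trace (A * B) = ∑ i, ∑ j, T.u ξ ξ (e i) (e j) * T.u (e j) (e i) η η := by
    simp only [Matrix.trace, Matrix.diag, Matrix.mul_apply, hA, hB, Matrix.of_apply]
  have h2 : Matrix.trace (N * N.map (starRingEnd ℂ))
      = ∑ i, ∑ j, T.u ξ (e i) η (e j) * T.u (e j) ξ (e i) η := by
    have hc : ∀ i j : Fin n, T.u ξ (e i) η (e j) = (starRingEnd ℂ) (N i j) := by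
      intro i j
      rw [T.herm ξ (e i) η (e j)]
      simp [hN]
    calc Matrix.trace (N * N.map (starRingEnd ℂ))
        = ∑ i, ∑ j, N i j * (starRingEnd ℂ) (N j i) := by
          simp only [Matrix.trace, Matrix.diag, Matrix.mul_apply, Matrix.map_apply]
      _ = ∑ j, ∑ i, N i j * (starRingEnd ℂ) (N j i) := Finset.sum_comm
      _ = ∑ i, ∑ j, T.u ξ (e i) η (e j) * T.u (e j) ξ (e i) η := by
          refine Finset.sum_congr rfl fun i _ => Finset.sum_congr rfl fun j _ => ?_
          rw [hc i j]
          have : T.u (e j) ξ (e i) η = N j i := by simp [hN]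
          rw [this]
          ring
  have hsplit : (∑ i, ∑ j, (T.u ξ ξ (e i) (e j) * T.u (e j) (e i) η η
        - T.u ξ (e i) η (e j) * T.u (e j) ξ (e i) η))
      = Matrix.trace (A * B) - Matrix.trace (N * N.map (starRingEnd ℂ)) := by
    rw [h1, h2]
    rw [← Finset.sum_sub_distrib]
    exact Finset.sum_congr rfl fun i _ => by rw [← Finset.sum_sub_distrib]
  rw [hsplit, Complex.sub_re]
  rw [htr] at hmk
  linarith
end
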